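/- arXiv:2503.08615 — 3 statements merged into one kernel-verified Lean document; each statement's English description precedes it below -/
import Mathlib

section
/- Let H be a monoid which is either a group, or whose set of non-units fails to be an almost-breakable subsemigroup of H (i.e. either some product of two non-units of H is a unit, or there exist non-units x, y with xy ∉ {x, y} and yx ∉ {x, y}). Then 𝒫fin,1(H) is UmF if and only if H is trivial or H has exactly two elements 1_H and u with u² = 1_H (i.e. H is isomorphic to the additive group of integers modulo 2). -/
/-!
Every divisor of `X` in `𝒫fin,1(H)` is a subset of `X`, so `{1, u}` is irreducible for `u ≠ 1`.
If some `x` has `x² ∉ {1, x}`, then `{1,x}³ = {1,x}{1,x²}`, and either this or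
`{1,x}² = {1,x}{1,x²}` gives two different minimal factorizations. Otherwise every non-unit is
idempotent, so no product of non-units is a unit, and a group has exponent two. In a group of
exponent two with distinct `a, b ≠ 1` we get `{1,a}{1,b} = {1,b}{1,ab}`; two idempotents with
`xy, yx ∉ {1,x,y}` give `{1,x}{1,y} = {1,x,y}{1,y}`, where `{1,x,y}` is irreducible.
Conversely, if `H ⊆ {1, u}` with `u² = 1`, then `𝒫fin,1(H) = {1, {1,u}}` with `{1,u}`
idempotent, and the only minimal factorizations are `[]` and `[{1,u}]`.
-/

open scoped Pointwise

section Defs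

variable {M : Type*} [Monoid M]

/-- `x` divides `y` (two-sidedly) in a monoid: `y = u * x * v` for some `u v`. -/
def dvdTS (x y : M) : Prop := ∃ u v : M, y = u * x * v

/-- A non-unit-divisor: an element that does not divide `1`. -/
def isNonUnitDivisor (x : M) : Prop := ¬ dvdTS x 1

/-- `x` properly divides `y`: `x` divides `y` but `y` does not divide `x`. -/
def properDvdTS (x y : M) : Prop := dvdTS x y ∧ ¬ dvdTS y x

/-- An irreducible: a non-unit-divisor `a` with `a ≠ x * y` whenever `x, y` are
non-unit-divisors properly dividing `a`. -/
def isIrred (a : M) : Prop :=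
  isNonUnitDivisor a ∧
    ∀ x y : M, isNonUnitDivisor x → isNonUnitDivisor y →
      properDvdTS x a → properDvdTS y a → a ≠ x * y

/-- An atom: a non-unit-divisor that is not a product of two non-unit-divisors. -/
def isAtomTS (a : M) : Prop :=
  isNonUnitDivisor a ∧ ∀ x y : M, isNonUnitDivisor x → isNonUnitDivisor y → a ≠ x * y

/-- A quark: a non-unit-divisor not properly divided by any non-unit-divisor. -/
def isQuarkTS (a : M) : Prop :=
  isNonUnitDivisor a ∧ ∀ x : M, isNonUnitDivisor x → ¬ properDvdTS x a

/-- A factorization of `x` into irreducibles, recorded as a list. -/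
def IsFactorization (l : List M) (x : M) : Prop :=
  (∀ a ∈ l, isIrred a) ∧ l.prod = x

/-- A minimal factorization: a factorization of `x` such that no product, in any order,
of a proper sub-multiset of its factors equals `x`. -/
def IsMinimalFactorization (l : List M) (x : M) : Prop :=
  IsFactorization l x ∧
    ∀ l' : List M, (↑l' : Multiset M) < (↑l : Multiset M) → l'.prod ≠ x

end Defs

/-- A unique minimal factorization (UmF) monoid: every non-identity element has a minimal
factorization into irreducibles, unique up to permutation of the factors. -/
def IsUmF (M : Type*) [Monoid M] : Prop :=
  (∀ x : M, x ≠ 1 → ∃ l : List M, IsMinimalFactorization l x) ∧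
    ∀ x : M, ∀ l l' : List M,
      IsMinimalFactorization l x → IsMinimalFactorization l' x → l.Perm l'

/-- The reduced finitary power monoid `𝒫fin,1(H)` of a monoid `H`: the submonoid of
`Finset H` (under pointwise multiplication) of finite subsets containing `1`. -/
def redPow (H : Type*) [Monoid H] [DecidableEq H] : Submonoid (Finset H) where
  carrier := {X : Finset H | (1 : H) ∈ X}
  one_mem' := by simp
  mul_mem' := by
    intro X Y hX hY
    simpa using Finset.mul_mem_mul hX hY

section Factorization

variable {M : Type*} [Monoid M] {e : M}

theorem isNonUnitDivisor.ne_one {x : M} (h : isNonUnitDivisor x) : x ≠ 1 := by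
  rintro rfl
  exact h ⟨1, 1, by simp⟩

theorem dvdTS_refl (x : M) : dvdTS x x := ⟨1, 1, by simp⟩

theorem isIrred.mul_ne_one {a : M} (ha : isIrred a) (b : M) : a * b ≠ 1 :=
  fun h => ha.1 ⟨1, b, by rw [one_mul, h]⟩

theorem isMinimalFactorization_pair {a b : M} (ha : isIrred a) (hb : isIrred b)
    (hab_a : a * b ≠ a) (hab_b : a * b ≠ b) : IsMinimalFactorization [a, b] (a * b) := by
  refine ⟨⟨by simp [ha, hb], by simp⟩, fun l hl hprod => ?_⟩
  match l, (by simpa using Multiset.card_lt_card hl : l.length < 2) with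
  | [], _ => exact ha.mul_ne_one b hprod.symm
  | [c], _ =>
    have hc : c ∈ [a, b] := Multiset.mem_of_le hl.le (by simp)
    simp only [List.mem_cons, List.not_mem_nil, or_false] at hc
    simp only [List.prod_cons, List.prod_nil, mul_one] at hprod
    rcases hc with rfl | rfl
    exacts [hab_a hprod.symm, hab_b hprod.symm]

theorem isMinimalFactorization_triple {a : M} (ha : isIrred a) (h₁ : a * a * a ≠ a)
    (h₂ : a * a * a ≠ a * a) : IsMinimalFactorization [a, a, a] (a * a * a) := by
  refine ⟨⟨by simp [ha], by simp [mul_assoc]⟩, fun l hl hprod => ?_⟩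
  have hla : ∀ c ∈ l, c = a := fun c hc => by
    simpa using Multiset.mem_of_le hl.le (by simpa using hc : c ∈ (l : Multiset M))
  match l, (by simpa using Multiset.card_lt_card hl : l.length < 3) with
  | [], _ => exact ha.mul_ne_one (a * a) (by rw [← mul_assoc]; exact hprod.symm)
  | [c], _ => simp [hla c (by simp)] at hprod; exact h₁ hprod.symm
  | [c, d], _ => simp [hla c (by simp), hla d (by simp)] at hprod; exact h₂ hprod.symm

theorem isIrred_of_forall_eq_one_or_eq (he : IsIdempotentElem e) (h : ∀ x : M, x = 1 ∨ x = e)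
    (he1 : e ≠ 1) : isIrred e := by
  refine ⟨fun ⟨u, v, huv⟩ => he1 ?_, fun x _ hx _ hxe _ _ => ?_⟩
  · have : u * e * v = e := by
      rcases h u with hu | hu <;> rcases h v with hv | hv <;> simp [hu, hv, he.eq]
    exact this.symm.trans huv.symm
  · rcases h x with rfl | rfl
    exacts [hx.ne_one rfl, hxe.2 (dvdTS_refl _)]

theorem IsMinimalFactorization.eq_nil_or_eq_singleton (he : IsIdempotentElem e)
    (h : ∀ x : M, x = 1 ∨ x = e) {l : List M} {x : M} (hl : IsMinimalFactorization l x) :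
    l = [] ∨ l = [e] := by
  have hle : ∀ a ∈ l, a = e := fun a ha => (h a).resolve_left (hl.1.1 a ha).1.ne_one
  match l, hle with
  | [], _ => exact .inl rfl
  | [a], hle => exact .inr (by rw [hle a (by simp)])
  | a :: b :: t, hle =>
    exfalso
    have hrep : a :: b :: t = List.replicate (t.length + 2) e :=
      List.eq_replicate_iff.2 ⟨rfl, hle⟩
    refine hl.2 [e] ?_ ?_
    · rw [hrep, Multiset.coe_replicate, Multiset.coe_singleton, ← Multiset.replicate_one]
      exact lt_of_le_of_ne ((Multiset.replicate_le_replicate e).2 (by omega))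
        (ne_of_apply_ne Multiset.card (by simp))
    · rw [← hl.1.2, hrep, List.prod_replicate, he.pow_succ_eq]
      simp

theorem isUmF_of_forall_eq_one_or_eq (he : IsIdempotentElem e) (h : ∀ x : M, x = 1 ∨ x = e) :
    IsUmF M := by
  refine ⟨fun x hx => ⟨[x], ?_⟩, fun x l l' hl hl' => ?_⟩
  · obtain rfl := (h x).resolve_left hx
    refine ⟨⟨by simpa using isIrred_of_forall_eq_one_or_eq he h hx, by simp⟩,
      fun l hl => ?_⟩
    rw [Multiset.coe_singleton, Multiset.lt_singleton, Multiset.coe_eq_zero] at hl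
    subst hl
    exact Ne.symm hx
  · rcases hl.eq_nil_or_eq_singleton he h with rfl | rfl <;>
      rcases hl'.eq_nil_or_eq_singleton he h with rfl | rfl
    · rfl
    · exact absurd (by simpa using hl.1.2.trans hl'.1.2.symm) (hl'.1.1 e (by simp)).1.ne_one.symm
    · exact absurd (by simpa using hl'.1.2.trans hl.1.2.symm) (hl.1.1 e (by simp)).1.ne_one.symm
    · rfl

end Factorization

theorem IsIdempotentElem.eq_one_of_isUnit_mul {M : Type*} [Monoid M] {x y : M}
    (hx : IsIdempotentElem x) (h : IsUnit (x * y)) : x = 1 :=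
  calc x = x * (x * y * ↑h.unit⁻¹) := by rw [h.mul_val_inv, mul_one]
    _ = x * y * ↑h.unit⁻¹ := by rw [← mul_assoc, ← mul_assoc, hx.eq]
    _ = 1 := h.mul_val_inv

theorem commute_of_mul_self_eq_one {M : Type*} [Monoid M] {a b : M} (ha : a * a = 1)
    (hb : b * b = 1) (hab : a * b * (a * b) = 1) : Commute a b :=
  calc a * b = a * (a * b * (a * b)) * b := by rw [hab, mul_one]
    _ = a * a * (b * a) * (b * b) := by simp only [mul_assoc]
    _ = b * a := by rw [ha, hb, one_mul, mul_one]

namespace redPow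

variable {H : Type*} [Monoid H] [DecidableEq H]

theorem coe_subset_coe_mul_left (X Y : redPow H) : (X : Finset H) ⊆ ↑(X * Y) :=
  Finset.subset_mul_left _ Y.2

theorem coe_subset_coe_mul_right (X Y : redPow H) : (Y : Finset H) ⊆ ↑(X * Y) :=
  Finset.subset_mul_right _ X.2

theorem coe_subset_of_dvdTS {X Y : redPow H} (h : dvdTS Y X) : (Y : Finset H) ⊆ X := by
  obtain ⟨U, V, rfl⟩ := h
  exact (coe_subset_coe_mul_right U Y).trans (coe_subset_coe_mul_left (U * Y) V)

theorem isNonUnitDivisor_iff_ne_one {X : redPow H} : isNonUnitDivisor X ↔ X ≠ 1 := by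
  refine ⟨isNonUnitDivisor.ne_one, fun hX hd => hX (Subtype.ext ?_)⟩
  exact Finset.Subset.antisymm (coe_subset_of_dvdTS hd) (Finset.one_subset.2 X.2)

theorem coe_ssubset_of_properDvdTS {X Y : redPow H} (h : properDvdTS Y X) :
    (Y : Finset H) ⊂ X := by
  refine (coe_subset_of_dvdTS h.1).ssubset_of_ne fun hYX => ?_
  obtain rfl := Subtype.ext hYX
  exact h.2 (dvdTS_refl Y)

theorem isIrred_of_forall_ssubset {X : redPow H} (hX : X ≠ 1)
    (h : ∀ Y Z : redPow H, Y ≠ 1 → Z ≠ 1 →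
      (Y : Finset H) ⊂ X → (Z : Finset H) ⊂ X → X ≠ Y * Z) :
    isIrred X :=
  ⟨isNonUnitDivisor_iff_ne_one.2 hX, fun Y Z hY hZ hYX hZX =>
    h Y Z (isNonUnitDivisor_iff_ne_one.1 hY) (isNonUnitDivisor_iff_ne_one.1 hZ)
      (coe_ssubset_of_properDvdTS hYX) (coe_ssubset_of_properDvdTS hZX)⟩

def insertOne (s : Finset H) : redPow H := ⟨insert 1 s, Finset.mem_insert_self 1 s⟩

@[simp] theorem coe_insertOne (s : Finset H) : (insertOne s : Finset H) = insert 1 s := rfl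

theorem ne_of_mem_of_notMem {X Y : redPow H} {z : H} (hX : z ∈ (X : Finset H))
    (hY : z ∉ (Y : Finset H)) : X ≠ Y := by
  rintro rfl
  exact hY hX

theorem eq_one_of_coe_ssubset {Y : redPow H} {u : H} (h : (Y : Finset H) ⊂ {1, u}) : Y = 1 := by
  obtain ⟨hsub, hne⟩ := Finset.ssubset_iff_subset_ne.1 h
  have h1 : (1 : H) ∈ (Y : Finset H) := Y.2
  have hmem : ∀ z ∈ (Y : Finset H), z = 1 ∨ z = u := by simpa [Finset.subset_iff] using hsub
  ext z
  simp only [Submonoid.coe_one, Finset.mem_one]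
  by_cases hu : u ∈ (Y : Finset H)
  · exact absurd (Finset.Subset.antisymm hsub (by simp [Finset.insert_subset_iff, h1, hu])) hne
  · grind

theorem eq_or_eq_of_coe_ssubset {Y : redPow H} {x y : H} (hY : Y ≠ 1)
    (h : (Y : Finset H) ⊂ {1, x, y}) : Y = insertOne {x} ∨ Y = insertOne {y} := by
  obtain ⟨hsub, hne⟩ := Finset.ssubset_iff_subset_ne.1 h
  have h1 : (1 : H) ∈ (Y : Finset H) := Y.2
  have hmem : ∀ z ∈ (Y : Finset H), z = 1 ∨ z = x ∨ z = y := by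
    simpa [Finset.subset_iff] using hsub
  simp only [Subtype.ext_iff, coe_insertOne]
  by_cases hx : x ∈ (Y : Finset H) <;> by_cases hy : y ∈ (Y : Finset H)
  · exact absurd (Finset.Subset.antisymm hsub (by simp [Finset.insert_subset_iff, h1, hx, hy])) hne
  · left; ext z; grind
  · right; ext z; grind
  · refine absurd (Subtype.ext ?_) hY
    ext z
    simp only [Submonoid.coe_one, Finset.mem_one]
    grind

theorem isIrred_insertOne_singleton {u : H} (hu : u ≠ 1) : isIrred (insertOne {u}) :=
  isIrred_of_forall_ssubset (ne_of_mem_of_notMem (z := u) (by simp) (by simpa using hu))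
    fun _ _ hY _ hYu _ => absurd (eq_one_of_coe_ssubset hYu) hY

theorem isIrred_insertOne_pair {x y : H} (hx : IsIdempotentElem x) (hy : IsIdempotentElem y)
    (hx1 : x ≠ 1) (hy1 : y ≠ 1) (hxy : x ≠ y) (hxyT : x * y ∉ ({1, x, y} : Finset H))
    (hyxT : y * x ∉ ({1, x, y} : Finset H)) : isIrred (insertOne {x, y}) := by
  refine isIrred_of_forall_ssubset (ne_of_mem_of_notMem (z := x) (by simp) (by simpa using hx1))
    fun Y Z hY hZ hYT hZT => ?_
  rcases eq_or_eq_of_coe_ssubset hY hYT with rfl | rfl <;>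
    rcases eq_or_eq_of_coe_ssubset hZ hZT with rfl | rfl
  · refine ne_of_mem_of_notMem (z := y) (by simp) ?_
    simp [Finset.mem_mul, or_and_right, exists_or, hx.eq, hy1.symm, hxy]
  · exact (ne_of_mem_of_notMem (Finset.mul_mem_mul (by simp) (by simp)) hxyT).symm
  · exact (ne_of_mem_of_notMem (Finset.mul_mem_mul (by simp) (by simp)) hyxT).symm
  · refine ne_of_mem_of_notMem (z := x) (by simp) ?_
    simp [Finset.mem_mul, or_and_right, exists_or, hy.eq, hx1.symm, hxy.symm]

theorem not_isUmF_of_mul_self_ne {x : H} (h1 : x * x ≠ 1) (hx : x * x ≠ x) :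
    ¬IsUmF (redPow H) := by
  intro humf
  have hx1 : x ≠ 1 := by rintro rfl; simp at hx
  set A := insertOne {x}
  set B := insertOne {x * x}
  have hA := isIrred_insertOne_singleton hx1
  have hB := isIrred_insertOne_singleton h1
  have hAAA : A * A * A = A * B := by
    ext z; simp [A, B, Finset.mem_mul, or_and_right, exists_or, mul_assoc]; grind
  have hABA : A * B ≠ A :=
    ne_of_mem_of_notMem (z := x * x) (coe_subset_coe_mul_right A B (by simp [B]))
      (by simp [A, h1, hx])
  have hABB : A * B ≠ B :=
    ne_of_mem_of_notMem (z := x) (coe_subset_coe_mul_left A B (by simp [A]))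
      (by simp [B, hx1, hx.symm])
  have hAB := isMinimalFactorization_pair hA hB hABA hABB
  by_cases hAA : A * A = A * B
  · have hperm := humf.2 _ _ _ hAB
      (hAA ▸ isMinimalFactorization_pair hA hA (hAA ▸ hABA) (hAA ▸ hABA))
    have hBA : B = A := by simpa using hperm.mem_iff.1 (by simp : B ∈ [A, B])
    exact ne_of_mem_of_notMem (z := x * x) (by simp [B]) (by simp [A, h1, hx]) hBA
  · have hperm := humf.2 _ _ _ hAB
      (hAAA ▸ isMinimalFactorization_triple hA (hAAA ▸ hABA) (hAAA ▸ Ne.symm hAA))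
    simpa using hperm.length_eq

theorem not_isUmF_of_commute {a b : H} (ha : a * a = 1) (hb : b * b = 1) (hab : Commute a b)
    (ha1 : a ≠ 1) (hb1 : b ≠ 1) (hne : a ≠ b) : ¬IsUmF (redPow H) := by
  intro humf
  have hbab : b * (a * b) = a := by rw [hab.eq, ← mul_assoc, hb, one_mul]
  have hab1 : a * b ≠ 1 := fun h => hne (by rw [← mul_one a, ← hb, ← mul_assoc, h, one_mul])
  have haba : a * b ≠ a := fun h => hb1 (by rw [← one_mul b, ← ha, mul_assoc, h, ha])
  set A := insertOne {a}
  set B := insertOne {b}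
  set C := insertOne {a * b}
  have hABC : A * B = B * C := by
    ext z; simp [A, B, C, Finset.mem_mul, or_and_right, exists_or, hbab]; grind
  have hAB_A : A * B ≠ A :=
    ne_of_mem_of_notMem (z := b) (coe_subset_coe_mul_right A B (by simp [B]))
      (by simp [A, hb1, hne.symm])
  have hAB_B : A * B ≠ B :=
    ne_of_mem_of_notMem (z := a) (coe_subset_coe_mul_left A B (by simp [A]))
      (by simp [B, ha1, hne])
  have hAB_C : A * B ≠ C :=
    ne_of_mem_of_notMem (z := a) (coe_subset_coe_mul_left A B (by simp [A]))
      (by simp [C, ha1, haba.symm])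
  have hperm := humf.2 _ _ _
    (isMinimalFactorization_pair (isIrred_insertOne_singleton ha1)
      (isIrred_insertOne_singleton hb1) hAB_A hAB_B)
    (hABC ▸ isMinimalFactorization_pair (isIrred_insertOne_singleton hb1)
      (isIrred_insertOne_singleton hab1) (hABC ▸ hAB_B) (hABC ▸ hAB_C))
  have hA : A = B ∨ A = C := by simpa using hperm.mem_iff.1 (by simp : A ∈ [A, B])
  rcases hA with h | h
  · exact ne_of_mem_of_notMem (z := a) (by simp [A]) (by simp [B, ha1, hne]) h
  · exact ne_of_mem_of_notMem (z := a) (by simp [A]) (by simp [C, ha1, haba.symm]) h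

theorem not_isUmF_of_isIdempotentElem {x y : H} (hx : IsIdempotentElem x)
    (hy : IsIdempotentElem y) (hxyT : x * y ∉ ({1, x, y} : Finset H))
    (hyxT : y * x ∉ ({1, x, y} : Finset H)) : ¬IsUmF (redPow H) := by
  intro humf
  have hx1 : x ≠ 1 := by rintro rfl; simp at hxyT
  have hy1 : y ≠ 1 := by rintro rfl; simp at hxyT
  have hxy : x ≠ y := by rintro rfl; simp [hx.eq] at hxyT
  set A := insertOne {x}
  set B := insertOne {y}
  set T := insertOne {x, y}
  have hT := isIrred_insertOne_pair hx hy hx1 hy1 hxy hxyT hyxT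
  have hTB : T * B = A * B := by
    ext z; simp [A, B, T, Finset.mem_mul, or_and_right, exists_or, hy.eq]; grind
  have hAB_A : A * B ≠ A :=
    ne_of_mem_of_notMem (z := y) (coe_subset_coe_mul_right A B (by simp [B]))
      (by simp [A, hy1, hxy.symm])
  have hAB_B : A * B ≠ B :=
    ne_of_mem_of_notMem (z := x) (coe_subset_coe_mul_left A B (by simp [A]))
      (by simp [B, hx1, hxy])
  have hAB_T : A * B ≠ T :=
    ne_of_mem_of_notMem (z := x * y) (Finset.mul_mem_mul (by simp [A]) (by simp [B])) hxyT
  have hperm := humf.2 _ _ _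
    (isMinimalFactorization_pair (isIrred_insertOne_singleton hx1)
      (isIrred_insertOne_singleton hy1) hAB_A hAB_B)
    (hTB ▸ isMinimalFactorization_pair hT (isIrred_insertOne_singleton hy1)
      (hTB ▸ hAB_T) (hTB ▸ hAB_B))
  have hT' : T = A ∨ T = B := by simpa using hperm.mem_iff.2 (by simp : T ∈ [T, B])
  rcases hT' with h | h
  · exact ne_of_mem_of_notMem (z := y) (by simp [T]) (by simp [A, hy1, hxy.symm]) h
  · exact ne_of_mem_of_notMem (z := x) (by simp [T]) (by simp [B, hx1, hxy]) h

theorem mul_self_eq_one_or_isIdempotentElem_of_isUmF (humf : IsUmF (redPow H)) (z : H) :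
    z * z = 1 ∨ IsIdempotentElem z := by
  by_contra! h
  exact not_isUmF_of_mul_self_ne h.1 h.2 humf

theorem eq_one_or_eq_of_isUmF (humf : IsUmF (redPow H)) (hinv : ∀ z : H, z * z = 1) {a : H}
    (ha : a ≠ 1) (b : H) : b = 1 ∨ b = a := by
  by_contra! hb
  exact not_isUmF_of_commute (hinv a) (hinv b)
    (commute_of_mul_self_eq_one (hinv a) (hinv b) (hinv _)) ha hb.1 (Ne.symm hb.2) humf

theorem eq_one_or_eq_insertOne {u : H} (h : ∀ x : H, x = 1 ∨ x = u) (X : redPow H) :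
    X = 1 ∨ X = insertOne {u} := by
  have h1 : (1 : H) ∈ (X : Finset H) := X.2
  by_cases hu : u ∈ (X : Finset H)
  · right; ext z; rcases h z with hz | hz <;> simp [hz, h1, hu]
  · have hu1 : u ≠ 1 := by rintro rfl; exact hu h1
    left; ext z; rcases h z with hz | hz <;> simp [hz, h1, hu, hu1]

theorem isIdempotentElem_insertOne {u : H} (hu : u * u = 1) :
    IsIdempotentElem (insertOne {u}) := by
  ext z; simp [Finset.mem_mul, or_and_right, exists_or, hu]; grind

end redPow

open redPow in
theorem stmt_11 {H : Type*} [Monoid H] [DecidableEq H]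
    (hH : (∀ x : H, IsUnit x) ∨
      (∃ x y : H, ¬ IsUnit x ∧ ¬ IsUnit y ∧ IsUnit (x * y)) ∨
      (∃ x y : H, ¬ IsUnit x ∧ ¬ IsUnit y ∧
        (x * y ≠ x ∧ x * y ≠ y) ∧ (y * x ≠ x ∧ y * x ≠ y))) :
    IsUmF (redPow H) ↔
      (∀ x : H, x = 1) ∨ ∃ u : H, u ≠ 1 ∧ u ^ 2 = 1 ∧ ∀ x : H, x = 1 ∨ x = u := by
  refine ⟨fun humf => ?_, fun h => ?_⟩
  · have hsq := mul_self_eq_one_or_isIdempotentElem_of_isUmF humf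
    have hidem (z : H) (hz : ¬IsUnit z) : IsIdempotentElem z :=
      (hsq z).resolve_left fun h => hz ⟨⟨z, z, h, h⟩, rfl⟩
    have hnu (z w : H) (hz : ¬IsUnit z) : ¬IsUnit (z * w) :=
      fun h => hz ((hidem z hz).eq_one_of_isUnit_mul h ▸ isUnit_one)
    rcases hH with hG | ⟨x, y, hx, -, hxy⟩ | ⟨x, y, hx, hy, ⟨hxyx, hxyy⟩, hyxx, hyxy⟩
    · have hinv (z : H) : z * z = 1 :=
        (hsq z).elim id fun h => h.eq.trans ((IsIdempotentElem.iff_eq_one_of_isUnit (hG z)).1 h)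
      by_cases htriv : ∀ x : H, x = 1
      · exact .inl htriv
      obtain ⟨a, ha⟩ := not_forall.1 htriv
      exact .inr ⟨a, ha, by rw [sq, hinv], eq_one_or_eq_of_isUmF humf hinv ha⟩
    · exact absurd hxy (hnu x y hx)
    · have hxy1 : x * y ≠ 1 := fun h => hnu x y hx (h ▸ isUnit_one)
      have hyx1 : y * x ≠ 1 := fun h => hnu y x hy (h ▸ isUnit_one)
      exact (not_isUmF_of_isIdempotentElem (hidem x hx) (hidem y hy)
        (by simp [hxy1, hxyx, hxyy]) (by simp [hyx1, hyxx, hyxy]) humf).elim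
  · obtain ⟨u, hu, hH⟩ : ∃ u : H, u * u = 1 ∧ ∀ x : H, x = 1 ∨ x = u := by
      rcases h with h | ⟨u, -, hu, h⟩
      exacts [⟨1, mul_one 1, fun x => .inl (h x)⟩, ⟨u, by rwa [sq] at hu, h⟩]
    exact isUmF_of_forall_eq_one_or_eq (isIdempotentElem_insertOne hu) (eq_one_or_eq_insertOne hH)
end

section
/- Let H be an almost-breakable monoid. An element X of 𝒫fin,1(H) is irreducible in 𝒫fin,1(H) if and only if X has exactly 2 elements, i.e. X = {1_H, x} for some x ∈ H with x ≠ 1_H. -/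
open scoped Pointwise

section AuxLemmas

variable {H : Type*} [Monoid H]

/-- Finding a minimal element of a finite set w.r.t. a transitive irreflexive relation. -/
lemma exists_min_rel {α : Type*} (r : α → α → Prop)
    (htrans : ∀ {x y z : α}, r x y → r y z → r x z)
    (hirr : ∀ x, ¬ r x x)
    (T : Finset α) : T.Nonempty → ∃ b ∈ T, ∀ c ∈ T, ¬ r c b := by
  classical
  induction T using Finset.strongInduction with
  | _ T ih =>
    intro hT
    obtain ⟨b, hb⟩ := hT
    by_cases h : ∀ c ∈ T, ¬ r c b
    · exact ⟨b, hb, h⟩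
    · push_neg at h
      obtain ⟨c, hcT, hrc⟩ := h
      have hss : T.filter (fun x => r x b) ⊂ T := by
        refine Finset.filter_ssubset.2 ⟨b, hb, hirr b⟩
      obtain ⟨b', hb'T, hmin⟩ := ih _ hss ⟨c, Finset.mem_filter.2 ⟨hcT, hrc⟩⟩
      refine ⟨b', (Finset.mem_filter.1 hb'T).1, ?_⟩
      intro d hd hrd
      exact hmin d (Finset.mem_filter.2 ⟨hd, htrans hrd (Finset.mem_filter.1 hb'T).2⟩) hrd

variable (hab : ∀ x y : H, (x * y = x ∨ x * y = y) ∨ (y * x = x ∨ y * x = y))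
include hab

lemma ab_idem (a : H) : a * a = a := by
  rcases hab a a with (h | h) | (h | h) <;> exact h

/-- The key lemma: an "L-type N-edge" into `b` forbids an "R-type N-edge" out of `b`. -/
lemma ab_key {a b c : H} (h1 : ¬ (a * b = a ∨ a * b = b)) (h2 : b * a = b)
    (h3 : ¬ (b * c = b ∨ b * c = c)) (h4 : c * b = b) : False := by
  push_neg at h1 h3
  rcases hab a c with (hac | hac) | (hca | hca)
  · -- a*c = a : then b*c = b
    refine h3.1 ?_
    calc b * c = (b * a) * c := by rw [h2]
      _ = b * (a * c) := mul_assoc _ _ _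
      _ = b * a := by rw [hac]
      _ = b := h2
  · -- a*c = c : then a*b = b
    refine h1.2 ?_
    calc a * b = a * (c * b) := by rw [h4]
      _ = (a * c) * b := (mul_assoc _ _ _).symm
      _ = c * b := by rw [hac]
      _ = b := h4
  · -- c*a = a
    have e1 : (a * c) * b = a * b := by rw [mul_assoc, h4]
    have e2 : b * (a * c) = b * c := by rw [← mul_assoc, h2]
    have q2 : (a * c) * a = a := by rw [mul_assoc, hca]; exact ab_idem hab a
    rcases hab (a * c) b with (h | h) | (h | h)
    · rw [e1] at h
      -- h : a*b = a*c
      have q1 : (a * b) * a = a * b := by rw [mul_assoc, h2]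
      rw [h, q2] at q1
      exact h1.1 (h.trans q1.symm)
    · rw [e1] at h; exact h1.2 h
    · rw [e2] at h
      -- h : b*c = a*c
      have q1 : (b * c) * a = b := by rw [mul_assoc, hca, h2]
      rw [h, q2] at q1
      -- q1 : a = b
      exact h1.1 (by rw [q1]; exact ab_idem hab b)
    · rw [e2] at h; exact h3.1 h
  · -- c*a = c
    have e1 : (a * c) * b = a * b := by rw [mul_assoc, h4]
    have e2 : b * (a * c) = b * c := by rw [← mul_assoc, h2]
    have q2 : c * (a * c) = c := by rw [← mul_assoc, hca]; exact ab_idem hab c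
    rcases hab (a * c) b with (h | h) | (h | h)
    · rw [e1] at h
      -- h : a*b = a*c
      have q1 : c * (a * b) = b := by rw [← mul_assoc, hca, h4]
      rw [h, q2] at q1
      -- q1 : c = b
      exact h3.1 (by rw [q1]; exact ab_idem hab b)
    · rw [e1] at h; exact h1.2 h
    · rw [e2] at h
      -- h : b*c = a*c
      have q1 : c * (b * c) = b * c := by rw [← mul_assoc, h4]
      rw [h, q2] at q1
      -- q1 : c = a*c
      exact h3.2 (h.trans q1.symm)
    · rw [e2] at h; exact h3.1 h

/-- Pivot lemma: every nonempty finite subset of an almost-breakable monoid has an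
element `b` with `b*z ∈ {b, z}` for every `z` in the set. -/
lemma ab_pivot (S : Finset H) (hS : S.Nonempty) :
    ∃ b ∈ S, ∀ z ∈ S, b * z = b ∨ b * z = z := by
  classical
  -- strict left and right divisibility relations
  set rR : H → H → Prop := fun x y => (∃ h, x = y * h) ∧ ¬ (∃ h, y = x * h) with hrR
  set rL : H → H → Prop := fun x y => (∃ h, x = h * y) ∧ ¬ (∃ h, y = h * x) with hrL
  have hRtrans : ∀ {x y z : H}, rR x y → rR y z → rR x z := by
    rintro x y z ⟨⟨h₁, e₁⟩, n₁⟩ ⟨⟨h₂, e₂⟩, n₂⟩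
    refine ⟨⟨h₂ * h₁, by rw [e₁, e₂, mul_assoc]⟩, ?_⟩
    rintro ⟨k, ek⟩
    exact n₁ ⟨k * h₂, by rw [e₂, ek, mul_assoc]⟩
  have hLtrans : ∀ {x y z : H}, rL x y → rL y z → rL x z := by
    rintro x y z ⟨⟨h₁, e₁⟩, n₁⟩ ⟨⟨h₂, e₂⟩, n₂⟩
    refine ⟨⟨h₁ * h₂, by rw [e₁, e₂, mul_assoc]⟩, ?_⟩
    rintro ⟨k, ek⟩
    exact n₁ ⟨h₂ * k, by rw [e₂, ek, mul_assoc]⟩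
  have hRirr : ∀ x, ¬ rR x x := by rintro x ⟨h₁, h₂⟩; exact h₂ h₁
  have hLirr : ∀ x, ¬ rL x x := by rintro x ⟨h₁, h₂⟩; exact h₂ h₁
  -- Step 1: an rR-maximal element a of S
  obtain ⟨a, haS, hamax⟩ :=
    exists_min_rel (fun x y => rR y x) (fun h h' => hRtrans h' h) (fun x => hRirr x) S hS
  -- T : elements of S with no R-type out-edge
  set T : Finset H := S.filter
      (fun b => ∀ z ∈ S, ¬ (¬ (b * z = b ∨ b * z = z) ∧ z * b = b)) with hT
  have haT : a ∈ T := by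
    refine Finset.mem_filter.2 ⟨haS, ?_⟩
    intro z hz ⟨hN, hza⟩
    refine hamax z hz ⟨⟨a, hza.symm⟩, ?_⟩
    rintro ⟨k, ek⟩
    refine hN (Or.inr ?_)
    calc a * z = a * (a * k) := by rw [ek]
      _ = (a * a) * k := (mul_assoc a a k).symm
      _ = a * k := by rw [ab_idem hab]
      _ = z := ek.symm
  -- Step 2: an rL-minimal element b of T
  obtain ⟨b, hbT, hbmin⟩ := exists_min_rel rL hLtrans hLirr T ⟨a, haT⟩
  have hbS : b ∈ S := (Finset.mem_filter.1 hbT).1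
  have hbnoR := (Finset.mem_filter.1 hbT).2
  refine ⟨b, hbS, ?_⟩
  intro z hz
  by_contra hN
  push_neg at hN
  have hN' : ¬ (b * z = b ∨ b * z = z) := by
    rintro (h | h)
    · exact hN.1 h
    · exact hN.2 h
  -- by hab, z*b ∈ {b, z}; z*b = b is forbidden since b ∈ T
  have hzb : z * b = z := by
    rcases hab b z with (h | h) | (h | h)
    · exact absurd (Or.inl h) hN'
    · exact absurd (Or.inr h) hN'
    · exact absurd (hbnoR z hz ⟨hN', h⟩).elim (fun h => h)
    · exact h
  -- z ∈ T by the key lemma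
  have hzT : z ∈ T := by
    refine Finset.mem_filter.2 ⟨hz, ?_⟩
    intro w hw ⟨hNw, hwz⟩
    exact ab_key hab hN' hzb hNw hwz
  -- z is rL-strictly below b, contradicting minimality
  refine hbmin z hzT ⟨⟨z, hzb.symm⟩, ?_⟩
  rintro ⟨k, ek⟩
  refine hN' (Or.inl ?_)
  calc b * z = (k * z) * z := by rw [← ek]
    _ = k * (z * z) := mul_assoc k z z
    _ = k * z := by rw [ab_idem hab]
    _ = b := ek.symm

end AuxLemmas

section RedPowAux

variable {H : Type*} [Monoid H] [DecidableEq H]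

lemma redPow_one_val : ((1 : redPow H) : Finset H) = {1} := rfl

lemma redPow_mul_val (A B : redPow H) :
    ((A * B : redPow H) : Finset H) = (A : Finset H) * (B : Finset H) := rfl

lemma redPow_mem_one (A : redPow H) : (1 : H) ∈ (A : Finset H) := A.2

lemma redPow_dvd_subset {A B : redPow H} (h : dvdTS A B) :
    (A : Finset H) ⊆ (B : Finset H) := by
  obtain ⟨U, V, hB⟩ := h
  intro x hx
  have : (1 * x) * 1 ∈ ((U : Finset H) * (A : Finset H)) * (V : Finset H) :=
    Finset.mul_mem_mul (Finset.mul_mem_mul (redPow_mem_one U) hx) (redPow_mem_one V)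
  have hBv : (B : Finset H) = ((U : Finset H) * (A : Finset H)) * (V : Finset H) := by
    rw [hB]; rfl
  rw [hBv]
  simpa using this

lemma redPow_nonunit_iff {A : redPow H} :
    isNonUnitDivisor A ↔ (A : Finset H) ≠ {1} := by
  constructor
  · intro h hA
    refine h ⟨1, 1, ?_⟩
    have : A = 1 := Subtype.ext (by rw [hA]; rfl)
    rw [this]; simp
  · intro h hd
    refine h ?_
    have hsub := redPow_dvd_subset hd
    rw [redPow_one_val] at hsub
    exact Finset.Subset.antisymm hsub (Finset.singleton_subset_iff.2 (redPow_mem_one A))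

end RedPowAux

theorem stmt_14 {H : Type*} [Monoid H] [DecidableEq H]
    (hab : ∀ x y : H, (x * y = x ∨ x * y = y) ∨ (y * x = x ∨ y * x = y))
    (X : redPow H) :
    isIrred X ↔ ∃ x : H, x ≠ 1 ∧ (X : Finset H) = {1, x} := by
  constructor
  · rintro ⟨hnu, hirr⟩
    by_contra hX
    push_neg at hX
    have hX1 : (X : Finset H) ≠ {1} := redPow_nonunit_iff.1 hnu
    have hSne : ((X : Finset H).erase 1).Nonempty := by
      rcases Finset.eq_empty_or_nonempty ((X : Finset H).erase 1) with he | hne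
      · exfalso
        apply hX1
        apply Finset.Subset.antisymm
        · intro x hx
          by_contra hx1
          have hmem : x ∈ (X : Finset H).erase 1 :=
            Finset.mem_erase.2 ⟨by simpa using hx1, hx⟩
          simp [he] at hmem
        · exact Finset.singleton_subset_iff.2 (redPow_mem_one X)
      · exact hne
    obtain ⟨b, hbS, hpiv⟩ := ab_pivot hab _ hSne
    have hb1 : b ≠ 1 := (Finset.mem_erase.1 hbS).1
    have hbX : b ∈ (X : Finset H) := (Finset.mem_erase.1 hbS).2
    have h1Y : (1 : H) ∈ ({1, b} : Finset H) := Finset.mem_insert_self 1 {b}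
    have hbY : b ∈ ({1, b} : Finset H) :=
      Finset.mem_insert_of_mem (Finset.mem_singleton_self b)
    have h1Z : (1 : H) ∈ (X : Finset H).erase b :=
      Finset.mem_erase.2 ⟨Ne.symm hb1, redPow_mem_one X⟩
    obtain ⟨Y, hYval⟩ : ∃ Y : redPow H, (Y : Finset H) = {1, b} := ⟨⟨{1, b}, h1Y⟩, rfl⟩
    obtain ⟨Z, hZval⟩ : ∃ Z : redPow H, (Z : Finset H) = (X : Finset H).erase b :=
      ⟨⟨(X : Finset H).erase b, h1Z⟩, rfl⟩
    have hmulv : ({1, b} : Finset H) * ((X : Finset H).erase b) = (X : Finset H) := by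
      apply Finset.Subset.antisymm
      · intro p hp
        rw [Finset.mem_mul] at hp
        obtain ⟨y, hy, z, hz, rfl⟩ := hp
        have hzX : z ∈ (X : Finset H) := Finset.mem_of_mem_erase hz
        rcases Finset.mem_insert.1 hy with rfl | hy'
        · simpa using hzX
        · have hyb : y = b := by simpa using hy'
          subst hyb
          by_cases hz1 : z = 1
          · subst hz1; simpa using hbX
          · have hzS : z ∈ (X : Finset H).erase 1 := Finset.mem_erase.2 ⟨hz1, hzX⟩
            rcases hpiv z hzS with h | h <;> rw [h]
            · exact hbX
            · exact hzX
      · intro x hx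
        by_cases hxb : x = b
        · subst hxb
          have hm := Finset.mul_mem_mul hbY h1Z
          simpa using hm
        · have hxZ : x ∈ (X : Finset H).erase b := Finset.mem_erase.2 ⟨hxb, hx⟩
          have hm := Finset.mul_mem_mul h1Y hxZ
          simpa using hm
    have hmul : Y * Z = X := by
      apply Subtype.ext
      rw [redPow_mul_val, hYval, hZval]
      exact hmulv
    have hYnu : isNonUnitDivisor Y := by
      refine redPow_nonunit_iff.2 ?_
      rw [hYval]
      intro h
      apply hb1
      have hbm : b ∈ ({1} : Finset H) := h ▸ hbY
      simpa using hbm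
    have hZnu : isNonUnitDivisor Z := by
      refine redPow_nonunit_iff.2 ?_
      rw [hZval]
      intro h
      apply hX b hb1
      apply Finset.Subset.antisymm
      · intro x hx
        by_cases hxb : x = b
        · subst hxb; exact hbY
        · have hxZ : x ∈ (X : Finset H).erase b := Finset.mem_erase.2 ⟨hxb, hx⟩
          rw [h] at hxZ
          have : x = 1 := by simpa using hxZ
          subst this; exact h1Y
      · intro x hx
        rcases Finset.mem_insert.1 hx with rfl | hx'
        · exact redPow_mem_one X
        · have : x = b := by simpa using hx'
          subst this; exact hbX
    have hYp : properDvdTS Y X := by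
      refine ⟨⟨1, Z, by rw [one_mul, hmul]⟩, ?_⟩
      intro hd
      have hs1 := redPow_dvd_subset hd
      rw [hYval] at hs1
      have hs2 : ({1, b} : Finset H) ⊆ (X : Finset H) := by
        intro t ht
        rcases Finset.mem_insert.1 ht with rfl | ht'
        · exact redPow_mem_one X
        · have : t = b := by simpa using ht'
          subst this; exact hbX
      exact hX b hb1 (Finset.Subset.antisymm hs1 hs2)
    have hZp : properDvdTS Z X := by
      refine ⟨⟨Y, 1, by rw [mul_one, hmul]⟩, ?_⟩
      intro hd
      have hs1 := redPow_dvd_subset hd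
      rw [hZval] at hs1
      exact (Finset.notMem_erase b (X : Finset H)) (hs1 hbX)
    exact hirr Y Z hYnu hZnu hYp hZp hmul.symm
  · rintro ⟨x, hx1, hXv⟩
    have hnu : isNonUnitDivisor X := by
      refine redPow_nonunit_iff.2 ?_
      rw [hXv]
      intro h
      apply hx1
      have hxm : x ∈ ({1} : Finset H) :=
        h ▸ (Finset.mem_insert_of_mem (Finset.mem_singleton_self x))
      simpa using hxm
    refine ⟨hnu, ?_⟩
    intro Y Z hYnu hZnu hYp hZp
    exfalso
    have hsub := redPow_dvd_subset hYp.1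
    have hYne := redPow_nonunit_iff.1 hYnu
    have hYX : (Y : Finset H) = (X : Finset H) := by
      rw [hXv] at hsub ⊢
      have hxY : x ∈ (Y : Finset H) := by
        by_contra hxY
        apply hYne
        apply Finset.Subset.antisymm
        · intro t ht
          rcases Finset.mem_insert.1 (hsub ht) with rfl | ht'
          · exact Finset.mem_singleton_self 1
          · have : t = x := by simpa using ht'
            exact absurd (this ▸ ht) hxY
        · exact Finset.singleton_subset_iff.2 (redPow_mem_one Y)
      apply Finset.Subset.antisymm hsub
      intro t ht
      rcases Finset.mem_insert.1 ht with rfl | ht'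
      · exact redPow_mem_one Y
      · have : t = x := by simpa using ht'
        subst this; exact hxY
    exact hYp.2 ⟨1, 1, by rw [one_mul, mul_one]; exact Subtype.ext hYX⟩
end

section
/- If H is a breakable monoid (i.e. xy ∈ {x, y} for all x, y ∈ H), then 𝒫fin,1(H) is UmF. -/
open scoped Pointwise

/-! In a breakable monoid `x * y ∈ {x, y}`, so the product of two finite sets containing `1`
is their union: `𝒫fin,1(H)` is the semilattice of such sets under `∪`, and divisibility is
inclusion. A set `A` with two elements `a ≠ b` besides `1` is the union of its proper subsets
`A \ {a}` and `A \ {b}`, so the irreducibles are exactly the sets `{1, a}` with `a ≠ 1`. A product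
of such sets contains `a ≠ 1` iff `{1, a}` is one of the factors; hence a minimal factorization of
`X` has no repeated factor and its factors are exactly the `{1, a}` with `a ∈ X \ {1}`. -/

namespace redPow

variable {H : Type*} [Monoid H] [DecidableEq H]

theorem one_mem_coe (X : redPow H) : (1 : H) ∈ (X : Finset H) := X.2

def pair (a : H) : redPow H := ⟨{1, a}, Finset.mem_insert_self 1 {a}⟩

theorem coe_pair (a : H) : ((pair a : redPow H) : Finset H) = {1, a} := rfl

noncomputable def pairs (X : redPow H) : List (redPow H) :=
  ((X : Finset H).erase 1).toList.map pair

theorem mem_pairs {X A : redPow H} :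
    A ∈ pairs X ↔ ∃ a ≠ 1, a ∈ (X : Finset H) ∧ pair a = A := by
  simp only [pairs, List.mem_map, Finset.mem_toList, Finset.mem_erase, and_assoc]

theorem nodup_pairs (X : redPow H) : (pairs X).Nodup := by
  refine (Finset.nodup_toList _).map_on fun a ha b _ hab => ?_
  have : a ∈ ((pair b : redPow H) : Finset H) := hab ▸ by simp [coe_pair]
  simpa [coe_pair, (Finset.mem_erase.1 (Finset.mem_toList.1 ha)).1] using this

section Breakable

variable (hbr : ∀ x y : H, x * y = x ∨ x * y = y)
include hbr

theorem coe_mul_eq_union (X Y : redPow H) :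
    ((X * Y : redPow H) : Finset H) = (X : Finset H) ∪ (Y : Finset H) := by
  ext z
  rw [Submonoid.coe_mul, Finset.mem_mul, Finset.mem_union]
  constructor
  · rintro ⟨x, hx, y, hy, rfl⟩
    rcases hbr x y with h | h <;> rw [h] <;> simp [hx, hy]
  · rintro (hz | hz)
    · exact ⟨z, hz, 1, one_mem_coe Y, mul_one z⟩
    · exact ⟨1, one_mem_coe X, z, hz, one_mul z⟩

theorem mem_coe_list_prod {l : List (redPow H)} {x : H} :
    x ∈ ((l.prod : redPow H) : Finset H) ↔ x = 1 ∨ ∃ A ∈ l, x ∈ (A : Finset H) := by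
  induction l with
  | nil => simp [Finset.mem_one]
  | cons A l ih =>
    rw [List.prod_cons, coe_mul_eq_union hbr, Finset.mem_union, ih]
    simp only [List.mem_cons, exists_eq_or_imp]
    tauto

theorem dvdTS_iff_subset {X Y : redPow H} : dvdTS X Y ↔ (X : Finset H) ⊆ Y := by
  constructor
  · rintro ⟨u, v, rfl⟩
    rw [coe_mul_eq_union hbr, coe_mul_eq_union hbr]
    exact Finset.subset_union_right.trans Finset.subset_union_left
  · intro h
    refine ⟨Y, 1, Subtype.ext ?_⟩
    rw [mul_one, coe_mul_eq_union hbr, Finset.union_eq_left.2 h]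

theorem properDvdTS_iff_ssubset {X Y : redPow H} :
    properDvdTS X Y ↔ (X : Finset H) ⊂ Y := by
  rw [properDvdTS, dvdTS_iff_subset hbr, dvdTS_iff_subset hbr, Finset.ssubset_def]

theorem isNonUnitDivisor_iff {X : redPow H} :
    isNonUnitDivisor X ↔ ∃ a ∈ (X : Finset H), a ≠ 1 := by
  rw [isNonUnitDivisor, dvdTS_iff_subset hbr, Submonoid.coe_one, ← Finset.singleton_one,
    Finset.subset_singleton_iff']
  simp only [not_forall, exists_prop, ne_eq]

theorem isIrred_pair {a : H} (ha : a ≠ 1) : isIrred (pair a) := by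
  refine ⟨(isNonUnitDivisor_iff hbr).2 ⟨a, by simp [coe_pair], ha⟩,
    fun X _ hX _ hXa _ _ => ?_⟩
  -- a proper divisor of `{1, a}` misses `a`, so it is `{1}`
  obtain ⟨x, hx, hx1⟩ := (isNonUnitDivisor_iff hbr).1 hX
  obtain ⟨hsub, hnot⟩ := Finset.ssubset_def.1 ((properDvdTS_iff_ssubset hbr).1 hXa)
  have hxa : x = a := by simpa [coe_pair, hx1] using hsub hx
  exact hnot (by simp [coe_pair, Finset.insert_subset_iff, one_mem_coe, hxa ▸ hx])

theorem not_isIrred_of_mem_of_mem {A : redPow H} {a b : H} (ha : a ∈ (A : Finset H))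
    (hb : b ∈ (A : Finset H)) (ha1 : a ≠ 1) (hb1 : b ≠ 1) (hab : a ≠ b) : ¬ isIrred A := by
  rintro ⟨-, hirr⟩
  let X : redPow H := ⟨(A : Finset H).erase a, Finset.mem_erase.2 ⟨ha1.symm, one_mem_coe A⟩⟩
  let Y : redPow H := ⟨(A : Finset H).erase b, Finset.mem_erase.2 ⟨hb1.symm, one_mem_coe A⟩⟩
  have hbX : b ∈ (X : Finset H) := Finset.mem_erase.2 ⟨hab.symm, hb⟩
  refine hirr X Y ((isNonUnitDivisor_iff hbr).2 ⟨b, hbX, hb1⟩)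
    ((isNonUnitDivisor_iff hbr).2 ⟨a, Finset.mem_erase.2 ⟨hab, ha⟩, ha1⟩)
    ((properDvdTS_iff_ssubset hbr).2 (Finset.erase_ssubset ha))
    ((properDvdTS_iff_ssubset hbr).2 (Finset.erase_ssubset hb)) (Subtype.ext ?_)
  rw [coe_mul_eq_union hbr]
  change (A : Finset H) = (A : Finset H).erase a ∪ (A : Finset H).erase b
  rw [Finset.union_erase_of_mem hbX, Finset.union_eq_right.2 (Finset.erase_subset a _)]

theorem exists_eq_pair_of_isIrred {A : redPow H} (hA : isIrred A) : ∃ a ≠ 1, A = pair a := by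
  obtain ⟨a, ha, ha1⟩ := (isNonUnitDivisor_iff hbr).1 hA.1
  refine ⟨a, ha1, Subtype.ext (Finset.Subset.antisymm (fun b hb => ?_) ?_)⟩
  · by_contra hb'
    simp only [coe_pair, Finset.mem_insert, Finset.mem_singleton, not_or] at hb'
    exact not_isIrred_of_mem_of_mem hbr ha hb ha1 hb'.1 (Ne.symm hb'.2) hA
  · simp [coe_pair, Finset.insert_subset_iff, one_mem_coe, ha]

theorem pair_mem_iff_mem_coe_list_prod {l : List (redPow H)} (hl : ∀ A ∈ l, isIrred A)
    {a : H} (ha : a ≠ 1) : pair a ∈ l ↔ a ∈ ((l.prod : redPow H) : Finset H) := by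
  rw [mem_coe_list_prod hbr]
  constructor
  · exact fun h => Or.inr ⟨pair a, h, by simp [coe_pair]⟩
  · rintro (h | ⟨B, hB, haB⟩)
    · exact absurd h ha
    · obtain ⟨b, -, rfl⟩ := exists_eq_pair_of_isIrred hbr (hl B hB)
      obtain rfl : a = b := by simpa [coe_pair, ha] using haB
      exact hB

theorem list_prod_eq_of_mem_iff {l l' : List (redPow H)} (h : ∀ A, A ∈ l ↔ A ∈ l') :
    l.prod = l'.prod :=
  Subtype.ext <| Finset.ext fun x => by simp only [mem_coe_list_prod hbr, h]

theorem isFactorization_pairs (X : redPow H) : IsFactorization (pairs X) X := by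
  refine ⟨fun A hA => ?_, Subtype.ext <| Finset.ext fun x => ?_⟩
  · obtain ⟨a, ha1, -, rfl⟩ := mem_pairs.1 hA
    exact isIrred_pair hbr ha1
  · rw [mem_coe_list_prod hbr]
    constructor
    · rintro (rfl | ⟨A, hA, hxA⟩)
      · exact one_mem_coe X
      · obtain ⟨a, -, haX, rfl⟩ := mem_pairs.1 hA
        obtain rfl | rfl : x = 1 ∨ x = a := by simpa [coe_pair] using hxA
        exacts [one_mem_coe X, haX]
    · intro hx
      by_cases hx1 : x = 1
      · exact Or.inl hx1
      · exact Or.inr ⟨pair x, mem_pairs.2 ⟨x, hx1, hx, rfl⟩, by simp [coe_pair]⟩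

theorem pair_mem_pairs_iff {X : redPow H} {a : H} (ha : a ≠ 1) :
    pair a ∈ pairs X ↔ a ∈ (X : Finset H) := by
  obtain ⟨hirr, hprod⟩ := isFactorization_pairs hbr X
  rw [pair_mem_iff_mem_coe_list_prod hbr hirr ha, hprod]

theorem isMinimalFactorization_pairs (X : redPow H) : IsMinimalFactorization (pairs X) X := by
  refine ⟨isFactorization_pairs hbr X, fun l hlt hprod => ?_⟩
  have hsub : ∀ A ∈ l, A ∈ pairs X := fun A hA =>
    Multiset.mem_coe.1 (Multiset.subset_of_le hlt.le (Multiset.mem_coe.2 hA))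
  obtain ⟨A, hA, hAl⟩ : ∃ A ∈ pairs X, A ∉ l := by
    by_contra! h
    exact hlt.not_ge ((Multiset.le_iff_subset (Multiset.coe_nodup.2 (nodup_pairs X))).2 h)
  obtain ⟨a, ha1, haX, rfl⟩ := mem_pairs.1 hA
  refine hAl ((pair_mem_iff_mem_coe_list_prod hbr (fun B hB => ?_) ha1).2 (hprod ▸ haX))
  exact (isFactorization_pairs hbr X).1 B (hsub B hB)

theorem nodup_of_isMinimalFactorization {l : List (redPow H)} {X : redPow H}
    (hl : IsMinimalFactorization l X) : l.Nodup := by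
  by_contra hnd
  refine hl.2 l.dedup (lt_of_le_of_ne ?_ ?_) ?_
  · rw [← Multiset.coe_dedup]; exact Multiset.dedup_le _
  · rw [← Multiset.coe_dedup, Ne, Multiset.dedup_eq_self]; exact hnd
  · rw [list_prod_eq_of_mem_iff hbr fun A => List.mem_dedup]; exact hl.1.2

theorem perm_pairs_of_isMinimalFactorization {l : List (redPow H)} {X : redPow H}
    (hl : IsMinimalFactorization l X) : l.Perm (pairs X) := by
  have key : ∀ a ≠ 1, pair a ∈ l ↔ pair a ∈ pairs X := fun a ha => by
    rw [pair_mem_iff_mem_coe_list_prod hbr hl.1.1 ha, hl.1.2, pair_mem_pairs_iff hbr ha]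
  refine (List.perm_ext_iff_of_nodup (nodup_of_isMinimalFactorization hbr hl)
    (nodup_pairs X)).2 fun A => ⟨fun hA => ?_, fun hA => ?_⟩
  · obtain ⟨a, ha, rfl⟩ := exists_eq_pair_of_isIrred hbr (hl.1.1 A hA)
    exact (key a ha).1 hA
  · obtain ⟨a, ha, rfl⟩ := exists_eq_pair_of_isIrred hbr ((isFactorization_pairs hbr X).1 A hA)
    exact (key a ha).2 hA

end Breakable

end redPow

theorem stmt_18 {H : Type*} [Monoid H] [DecidableEq H]
    (hbr : ∀ x y : H, x * y = x ∨ x * y = y) : IsUmF (redPow H) :=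
  ⟨fun X _ => ⟨redPow.pairs X, redPow.isMinimalFactorization_pairs hbr X⟩,
    fun _ _ _ hl hl' => (redPow.perm_pairs_of_isMinimalFactorization hbr hl).trans
      (redPow.perm_pairs_of_isMinimalFactorization hbr hl').symm⟩
end
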